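/- Population version of Proposition 3 (two well-separated clusters). Let μX ≥ 0 and μY ≥ 0, and set a = 2 φ(μY) + 2 μY Φ(μY) − μY (the conditional mean E(Y | Y > 0) of the Y-marginal of the mixture). If the separation condition 2 φ(μY) + μY + 2 μY Φ(μY) < 4 μY Φ(μX) holds, then ∫∫_{ℝ²} [ (y − a)² 1{x > 0} + (y + a)² 1{x < 0} ] f(x, y) dx dy < ∫∫_{ℝ²} y² f(x, y) dx dy; that is, the population two-cluster cross-validation error is strictly smaller than the population one-cluster cross-validation error. -/

import Mathlib

open MeasureTheory

noncomputable section

/-- The standard normal density `φ(z) = (2π)^{−1/2} exp(−z²/2)`. -/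
def phi (z : ℝ) : ℝ := (Real.sqrt (2 * Real.pi))⁻¹ * Real.exp (-z ^ 2 / 2)

/-- The standard normal cumulative distribution function `Φ(x) = ∫_{−∞}^x φ(z) dz`. -/
def Phi (x : ℝ) : ℝ := ∫ z in Set.Iic x, phi z

/-- The joint density on `ℝ²` of an equiprobable mixture of two bivariate normal
distributions with identity covariance and means `(μX, μY)` and `(−μX, −μY)`. -/
def fmix2 (μX μY : ℝ) (p : ℝ × ℝ) : ℝ :=
  (1 / 2) * phi (p.1 - μX) * phi (p.2 - μY) + (1 / 2) * phi (p.1 + μX) * phi (p.2 + μY)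


lemma phi_pos (z : ℝ) : 0 < phi z := by
  unfold phi
  positivity

lemma phi_neg (z : ℝ) : phi (-z) = phi z := by unfold phi; ring_nf

lemma phi_eq (z : ℝ) : phi z = (Real.sqrt (2 * Real.pi))⁻¹ * Real.exp (-(1/2) * z ^ 2) := by
  unfold phi; ring_nf

lemma continuous_phi : Continuous phi := by
  unfold phi; fun_prop

lemma integrable_phi : Integrable phi := by
  have := (integrable_exp_neg_mul_sq (by norm_num : (0:ℝ) < 1/2)).const_mul (Real.sqrt (2 * Real.pi))⁻¹
  apply this.congr
  filter_upwards with x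
  rw [phi_eq]

lemma integral_phi : ∫ z, phi z = 1 := by
  have h := integral_gaussian (1/2 : ℝ)
  have h2 : Real.sqrt (Real.pi / (1/2)) = Real.sqrt (2 * Real.pi) := by norm_num [mul_comm]
  simp only [phi_eq, integral_const_mul, h, h2]
  rw [inv_mul_cancel₀]
  positivity

lemma integrable_id_mul_phi : Integrable (fun x => x * phi x) := by
  have := (integrable_mul_exp_neg_mul_sq (by norm_num : (0:ℝ) < 1/2)).const_mul (Real.sqrt (2 * Real.pi))⁻¹
  apply this.congr
  filter_upwards with x
  rw [phi_eq]; ring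

lemma integral_id_mul_phi : ∫ x, x * phi x = 0 := by
  have h : ∫ x, (fun x => x * phi x) (-x) = ∫ x, x * phi x := integral_neg_eq_self (fun x : ℝ => x * phi x) volume
  simp only [phi_neg, neg_mul] at h
  rw [integral_neg] at h
  linarith

lemma integrable_sq_mul_phi : Integrable (fun x => x ^ 2 * phi x) := by
  have := (integrable_rpow_mul_exp_neg_mul_sq (by norm_num : (0:ℝ) < 1/2) (by norm_num : (-1:ℝ) < 2)).const_mul (Real.sqrt (2 * Real.pi))⁻¹
  apply this.congr
  filter_upwards with x
  rw [phi_eq, show ((2:ℝ) = ((2:ℕ):ℝ)) by norm_num, Real.rpow_natCast]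
  ring

lemma hasDerivAt_phi (x : ℝ) : HasDerivAt phi (-x * phi x) x := by
  have h1 : HasDerivAt (fun x : ℝ => -x ^ 2 / 2) (-x) x := by
    have := ((hasDerivAt_pow 2 x).neg).div_const 2
    refine this.congr_deriv ?_
    push_cast; ring
  have h2 := (h1.exp).const_mul (Real.sqrt (2 * Real.pi))⁻¹
  refine h2.congr_deriv ?_
  unfold phi; ring

lemma hasDerivAt_F (x : ℝ) : HasDerivAt (fun x => -x * phi x) (x ^ 2 * phi x - phi x) x := by
  have := ((hasDerivAt_id x).neg).mul (hasDerivAt_phi x)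
  refine this.congr_deriv ?_
  simp; ring

lemma tendsto_mul_phi_atTop : Filter.Tendsto (fun x => x * phi x) Filter.atTop (nhds 0) := by
  have h := rpow_mul_exp_neg_mul_sq_isLittleO_exp_neg (by norm_num : (0:ℝ) < 1/2) 1
  have h2 : Filter.Tendsto (fun x : ℝ => Real.exp (-(1/2) * x)) Filter.atTop (nhds 0) := by
    have := Real.tendsto_exp_atBot.comp (Filter.tendsto_id.const_mul_atTop_of_neg (by norm_num : (-(1/2):ℝ) < 0))
    exact this
  have h3 : Filter.Tendsto (fun x : ℝ => x ^ (1:ℝ) * Real.exp (-(1/2) * x ^ 2)) Filter.atTop (nhds 0) :=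
    h.isBigO.trans_tendsto h2
  have h4 : Filter.Tendsto (fun x : ℝ => x * Real.exp (-(1/2) * x ^ 2)) Filter.atTop (nhds 0) := by
    apply h3.congr'
    filter_upwards [Filter.eventually_ge_atTop (0:ℝ)] with x hx
    rw [Real.rpow_one]
  have h5 := h4.const_mul (Real.sqrt (2 * Real.pi))⁻¹
  rw [mul_zero] at h5
  apply h5.congr
  intro x
  rw [phi_eq]; ring

lemma tendsto_F_atTop : Filter.Tendsto (fun x => -x * phi x) Filter.atTop (nhds 0) := by
  have := tendsto_mul_phi_atTop.neg
  rw [neg_zero] at this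
  apply this.congr; intro x; ring

lemma tendsto_F_atBot : Filter.Tendsto (fun x => -x * phi x) Filter.atBot (nhds 0) := by
  have h := tendsto_mul_phi_atTop.comp Filter.tendsto_neg_atBot_atTop
  apply h.congr
  intro x
  simp only [Function.comp_apply, phi_neg, neg_mul]

lemma integral_sq_mul_phi : ∫ x, x ^ 2 * phi x = 1 := by
  have hint : Integrable (fun x => x ^ 2 * phi x - phi x) := integrable_sq_mul_phi.sub integrable_phi
  have h1 : ∫ x in Set.Ioi 0, (x ^ 2 * phi x - phi x) = 0 - (-0 * phi 0) :=
    integral_Ioi_of_hasDerivAt_of_tendsto' (fun x _ => hasDerivAt_F x) hint.integrableOn tendsto_F_atTop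
  have h2 : ∫ x in Set.Iic 0, (x ^ 2 * phi x - phi x) = (-0 * phi 0) - 0 :=
    integral_Iic_of_hasDerivAt_of_tendsto' (fun x _ => hasDerivAt_F x) hint.integrableOn tendsto_F_atBot
  have h3 : ∫ x, (x ^ 2 * phi x - phi x) = 0 := by
    rw [← integral_add_compl (measurableSet_Iic : MeasurableSet (Set.Iic (0:ℝ))) hint, Set.compl_Iic, h1, h2]
    ring
  have h4 := integral_sub integrable_sq_mul_phi integrable_phi
  rw [h4, integral_phi] at h3
  linarith

lemma integral_Ioi_phi (t : ℝ) : ∫ x in Set.Ioi t, phi x = Phi (-t) := by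
  have h := integral_comp_neg_Ioi t phi
  simp only [phi_neg] at h
  rw [h]; rfl

lemma Phi_add_Phi_neg (c : ℝ) : Phi c + Phi (-c) = 1 := by
  have h := integral_add_compl (measurableSet_Iic : MeasurableSet (Set.Iic c)) integrable_phi
  rw [Set.compl_Iic, integral_Ioi_phi, integral_phi] at h
  exact h

lemma Phi_half_le {c : ℝ} (hc : 0 ≤ c) : 1/2 ≤ Phi c := by
  have h0 : Phi 0 = 1/2 := by
    have := Phi_add_Phi_neg 0
    rw [neg_zero] at this; linarith
  rw [← h0]
  apply setIntegral_mono_set integrable_phi.integrableOn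
  · filter_upwards with x using (phi_pos x).le
  · filter_upwards with x (hx : x ≤ 0) using le_trans hx hc

lemma integral_Ioi_phi_sub (c : ℝ) : ∫ x in Set.Ioi 0, phi (x - c) = Phi c := by
  rw [← integral_indicator measurableSet_Ioi]
  have h : ∀ x : ℝ, (Set.Ioi (0:ℝ)).indicator (fun x => phi (x - c)) x
      = (Set.Ioi (-c)).indicator phi (x - c) := by
    intro x
    rw [Set.indicator_apply, Set.indicator_apply]
    exact if_congr (by simp only [Set.mem_Ioi]; constructor <;> intro <;> linarith) rfl rfl
  simp_rw [h]
  rw [integral_sub_right_eq_self ((Set.Ioi (-c)).indicator phi) c,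
    integral_indicator measurableSet_Ioi, integral_Ioi_phi, neg_neg]

lemma integral_Iio_phi_sub (c : ℝ) : ∫ x in Set.Iio 0, phi (x - c) = Phi (-c) := by
  rw [← integral_indicator measurableSet_Iio]
  have h : ∀ x : ℝ, (Set.Iio (0:ℝ)).indicator (fun x => phi (x - c)) x
      = (Set.Iio (-c)).indicator phi (x - c) := by
    intro x
    rw [Set.indicator_apply, Set.indicator_apply]
    exact if_congr (by simp only [Set.mem_Iio]; constructor <;> intro <;> linarith) rfl rfl
  simp_rw [h]
  rw [integral_sub_right_eq_self ((Set.Iio (-c)).indicator phi) c,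
    integral_indicator measurableSet_Iio, setIntegral_congr_set Iio_ae_eq_Iic]
  rfl

lemma integrable_quad (b c : ℝ) : Integrable (fun y => (y - b) ^ 2 * phi (y - c)) := by
  have h : Integrable (fun u : ℝ => u ^ 2 * phi u + (2 * (c - b)) * (u * phi u)
      + (c - b) ^ 2 * phi u) :=
    (integrable_sq_mul_phi.add (integrable_id_mul_phi.const_mul _)).add (integrable_phi.const_mul _)
  have h2 := h.comp_sub_right c
  apply h2.congr
  filter_upwards with y
  show _ = _
  ring

lemma integral_quad (b c : ℝ) : ∫ y, (y - b) ^ 2 * phi (y - c) = 1 + (c - b) ^ 2 := by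
  have I1 : Integrable (fun u : ℝ => u ^ 2 * phi u + 2 * (c - b) * (u * phi u)) :=
    integrable_sq_mul_phi.add (integrable_id_mul_phi.const_mul _)
  have I2 : Integrable (fun u : ℝ => (c - b) ^ 2 * phi u) := integrable_phi.const_mul _
  have h1 : ∫ y, (y - b) ^ 2 * phi (y - c)
      = ∫ u, (u ^ 2 * phi u + 2 * (c - b) * (u * phi u) + (c - b) ^ 2 * phi u) := by
    rw [← integral_sub_right_eq_self
      (fun u => u ^ 2 * phi u + 2 * (c - b) * (u * phi u) + (c - b) ^ 2 * phi u) c]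
    congr 1; ext y; show _ = _; ring
  rw [h1, integral_add I1 I2,
    integral_add integrable_sq_mul_phi (integrable_id_mul_phi.const_mul _),
    integral_const_mul, integral_const_mul, integral_sq_mul_phi, integral_id_mul_phi, integral_phi]
  ring

lemma prod_int (F G : ℝ → ℝ) (hF : Integrable F) (hG : Integrable G) :
    ∫ p : ℝ × ℝ, F p.1 * G p.2 = (∫ x, F x) * ∫ y, G y := by
  rw [Measure.volume_eq_prod, integral_prod_mul]

lemma prod_integrable (F G : ℝ → ℝ) (hF : Integrable F) (hG : Integrable G) :
    Integrable (fun p : ℝ × ℝ => F p.1 * G p.2) := by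
  rw [Measure.volume_eq_prod]; exact hF.mul_prod hG

lemma integrable_half (S : Set ℝ) (hS : MeasurableSet S) (b c d : ℝ) :
    Integrable (fun p : ℝ × ℝ =>
      S.indicator (fun x => phi (x - c)) p.1 * (1/2 * ((p.2 - b) ^ 2 * phi (p.2 - d)))) :=
  prod_integrable _ _ ((integrable_phi.comp_sub_right c).indicator hS)
    ((integrable_quad b d).const_mul _)

lemma integral_half (S : Set ℝ) (hS : MeasurableSet S) (b c d : ℝ) :
    (∫ p : ℝ × ℝ,
      S.indicator (fun x => phi (x - c)) p.1 * (1/2 * ((p.2 - b) ^ 2 * phi (p.2 - d))))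
      = (∫ x in S, phi (x - c)) * (1/2 * (1 + (d - b) ^ 2)) := by
  rw [prod_int _ _ ((integrable_phi.comp_sub_right c).indicator hS)
    ((integrable_quad b d).const_mul _), integral_indicator hS, integral_const_mul, integral_quad]

lemma integrable_full (b c d : ℝ) :
    Integrable (fun p : ℝ × ℝ => phi (p.1 - c) * (1/2 * ((p.2 - b) ^ 2 * phi (p.2 - d)))) :=
  prod_integrable _ _ (integrable_phi.comp_sub_right c) ((integrable_quad b d).const_mul _)

lemma integral_full (b c d : ℝ) :
    (∫ p : ℝ × ℝ, phi (p.1 - c) * (1/2 * ((p.2 - b) ^ 2 * phi (p.2 - d))))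
      = 1/2 * (1 + (d - b) ^ 2) := by
  rw [prod_int _ _ (integrable_phi.comp_sub_right c) ((integrable_quad b d).const_mul _),
    integral_sub_right_eq_self phi c, integral_phi, one_mul, integral_const_mul, integral_quad]

/-- **Population version of Proposition 3 (two well-separated clusters).**
Let `μX, μY ≥ 0` and `a = 2φ(μY) + 2μY Φ(μY) − μY` (the conditional mean `E(Y | Y > 0)` of
the `Y`-marginal of the mixture).  If `2φ(μY) + μY + 2μY Φ(μY) < 4μY Φ(μX)`, then the
population two-cluster cross-validation error is strictly smaller than the population
one-cluster cross-validation error. -/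
theorem two_clusters_beat_one (μX μY : ℝ) (hμX : 0 ≤ μX) (hμY : 0 ≤ μY)
    (a : ℝ) (ha : a = 2 * phi μY + 2 * μY * Phi μY - μY)
    (hsep : 2 * phi μY + μY + 2 * μY * Phi μY < 4 * μY * Phi μX) :
    (∫ p : ℝ × ℝ,
        ((if 0 < p.1 then (p.2 - a) ^ 2 else 0)
          + (if p.1 < 0 then (p.2 + a) ^ 2 else 0)) * fmix2 μX μY p)
      < ∫ p : ℝ × ℝ, p.2 ^ 2 * fmix2 μX μY p := by
  have hL : (fun p : ℝ × ℝ =>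
      ((if 0 < p.1 then (p.2 - a) ^ 2 else 0)
        + (if p.1 < 0 then (p.2 + a) ^ 2 else 0)) * fmix2 μX μY p)
      = fun p : ℝ × ℝ =>
        ((Set.Ioi (0:ℝ)).indicator (fun x => phi (x - μX)) p.1
            * (1/2 * ((p.2 - a) ^ 2 * phi (p.2 - μY)))
          + (Set.Ioi (0:ℝ)).indicator (fun x => phi (x - -μX)) p.1
            * (1/2 * ((p.2 - a) ^ 2 * phi (p.2 - -μY))))
        + ((Set.Iio (0:ℝ)).indicator (fun x => phi (x - μX)) p.1
            * (1/2 * ((p.2 - -a) ^ 2 * phi (p.2 - μY)))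
          + (Set.Iio (0:ℝ)).indicator (fun x => phi (x - -μX)) p.1
            * (1/2 * ((p.2 - -a) ^ 2 * phi (p.2 - -μY)))) := by
    funext p
    by_cases h1 : 0 < p.1 <;> by_cases h2 : p.1 < 0 <;>
      simp only [Set.indicator_apply, Set.mem_Ioi, Set.mem_Iio, h1, h2, if_true, if_false,
        fmix2, sub_neg_eq_add] <;> ring
  have hR : (fun p : ℝ × ℝ => p.2 ^ 2 * fmix2 μX μY p)
      = fun p : ℝ × ℝ =>
        phi (p.1 - μX) * (1/2 * ((p.2 - 0) ^ 2 * phi (p.2 - μY)))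
          + phi (p.1 - -μX) * (1/2 * ((p.2 - 0) ^ 2 * phi (p.2 - -μY))) := by
    funext p
    simp only [fmix2, sub_neg_eq_add, sub_zero]
    ring
  have i1 := integrable_half (Set.Ioi 0) measurableSet_Ioi a μX μY
  have i2 := integrable_half (Set.Ioi 0) measurableSet_Ioi a (-μX) (-μY)
  have i3 := integrable_half (Set.Iio 0) measurableSet_Iio (-a) μX μY
  have i4 := integrable_half (Set.Iio 0) measurableSet_Iio (-a) (-μX) (-μY)
  have i12 : Integrable (fun p : ℝ × ℝ =>
      (Set.Ioi (0:ℝ)).indicator (fun x => phi (x - μX)) p.1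
          * (1/2 * ((p.2 - a) ^ 2 * phi (p.2 - μY)))
        + (Set.Ioi (0:ℝ)).indicator (fun x => phi (x - -μX)) p.1
          * (1/2 * ((p.2 - a) ^ 2 * phi (p.2 - -μY)))) := i1.add i2
  have i34 : Integrable (fun p : ℝ × ℝ =>
      (Set.Iio (0:ℝ)).indicator (fun x => phi (x - μX)) p.1
          * (1/2 * ((p.2 - -a) ^ 2 * phi (p.2 - μY)))
        + (Set.Iio (0:ℝ)).indicator (fun x => phi (x - -μX)) p.1
          * (1/2 * ((p.2 - -a) ^ 2 * phi (p.2 - -μY)))) := i3.add i4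
  have eL : (∫ p : ℝ × ℝ,
      ((if 0 < p.1 then (p.2 - a) ^ 2 else 0)
        + (if p.1 < 0 then (p.2 + a) ^ 2 else 0)) * fmix2 μX μY p)
      = Phi μX * (1/2 * (1 + (μY - a) ^ 2)) + Phi (-μX) * (1/2 * (1 + (-μY - a) ^ 2))
        + (Phi (-μX) * (1/2 * (1 + (μY - -a) ^ 2)) + Phi μX * (1/2 * (1 + (-μY - -a) ^ 2))) := by
    rw [hL, integral_add i12 i34, integral_add i1 i2, integral_add i3 i4,
      integral_half _ measurableSet_Ioi, integral_half _ measurableSet_Ioi,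
      integral_half _ measurableSet_Iio, integral_half _ measurableSet_Iio,
      integral_Ioi_phi_sub, integral_Ioi_phi_sub, integral_Iio_phi_sub, integral_Iio_phi_sub,
      neg_neg]
  have eR : (∫ p : ℝ × ℝ, p.2 ^ 2 * fmix2 μX μY p)
      = 1/2 * (1 + (μY - 0) ^ 2) + 1/2 * (1 + (-μY - 0) ^ 2) := by
    rw [hR, integral_add (integrable_full 0 μX μY) (integrable_full 0 (-μX) (-μY)),
      integral_full, integral_full]
  rw [eL, eR]
  have hPhi : Phi μX + Phi (-μX) = 1 := Phi_add_Phi_neg μX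
  have hapos : 0 < a := by
    have h1 := phi_pos μY
    have h2 := Phi_half_le hμY
    nlinarith
  have hsep2 : a + 2 * μY < 4 * μY * Phi μX := by rw [ha]; linarith
  nlinarith [mul_pos hapos (sub_pos.mpr hsep2)]
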